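/- Let x be a sequence in a normed linear space X and c an I-statistical cluster point of x. Then for every rough I-statistical limit ξ of x with degree r, ‖ξ − c‖ ≤ r. -/

import Mathlib

open scoped Classical

/-- `I` is a nontrivial admissible ideal on `ℕ`. -/
def IsAdmissibleIdeal (I : Set (Set ℕ)) : Prop :=
  (∅ : Set ℕ) ∈ I ∧ (Set.univ : Set ℕ) ∉ I ∧
  (∀ A B : Set ℕ, A ∈ I → B ∈ I → A ∪ B ∈ I) ∧
  (∀ A B : Set ℕ, A ∈ I → B ⊆ A → B ∈ I) ∧
  (∀ n : ℕ, ({n} : Set ℕ) ∈ I)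

/-- `(1/n) * |{k ≤ n : P k}|` (indices `k` running over `1,…,n`). -/
noncomputable def stCount (P : ℕ → Prop) (n : ℕ) : ℝ :=
  ((Finset.Icc 1 n).filter P).card / n

/-- `I`-convergence of a real sequence `a` to `L`. -/
def ITendsto (I : Set (Set ℕ)) (a : ℕ → ℝ) (L : ℝ) : Prop :=
  ∀ ε : ℝ, 0 < ε → {n : ℕ | ε ≤ |a n - L|} ∈ I

/-- `ξ` is a rough `I`-statistical limit of `x` with roughness degree `r`
(the `δ` formulation). -/
def RoughIStatLim {X : Type*} [NormedAddCommGroup X] (I : Set (Set ℕ))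
    (x : ℕ → X) (r : ℝ) (ξ : X) : Prop :=
  ∀ ε : ℝ, 0 < ε → ∀ δ : ℝ, 0 < δ →
    {n : ℕ | δ ≤ stCount (fun k => r + ε ≤ ‖x k - ξ‖) n} ∈ I

/-- `ξ` is a rough `I`-statistical limit of `x` with roughness degree `r`
(the `I`-density formulation). -/
def RoughIStatLim' {X : Type*} [NormedAddCommGroup X] (I : Set (Set ℕ))
    (x : ℕ → X) (r : ℝ) (ξ : X) : Prop :=
  ∀ ε : ℝ, 0 < ε → ITendsto I (stCount (fun k => r + ε ≤ ‖x k - ξ‖)) 0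

/-- `x` is `I`-statistically convergent to `ξ`. -/
def IStatConv {X : Type*} [NormedAddCommGroup X] (I : Set (Set ℕ))
    (x : ℕ → X) (ξ : X) : Prop :=
  ∀ ε : ℝ, 0 < ε → ∀ δ : ℝ, 0 < δ →
    {n : ℕ | δ ≤ stCount (fun k => ε ≤ ‖x k - ξ‖) n} ∈ I

/-- `c` is an `I`-statistical cluster point of `x`. -/
def IStatClusterPt {X : Type*} [NormedAddCommGroup X] (I : Set (Set ℕ))
    (x : ℕ → X) (c : X) : Prop :=
  ∀ ε : ℝ, 0 < ε → ¬ ITendsto I (stCount (fun k => ‖x k - c‖ < ε)) 0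

/-- `x` is `I`-statistically bounded. -/
def IStatBounded {X : Type*} [NormedAddCommGroup X] (I : Set (Set ℕ))
    (x : ℕ → X) : Prop :=
  ∃ G : ℝ, 0 < G ∧ ∀ δ : ℝ, 0 < δ →
    {n : ℕ | δ ≤ stCount (fun k => G ≤ ‖x k‖) n} ∈ I


/-! If `‖ξ - c‖ > r`, put `ε = (‖ξ - c‖ - r) / 2`. By the triangle inequality every `k` with
`‖x k - c‖ < ε` has `‖x k - ξ‖ ≥ r + ε`, so the density of the `ε`-ball around `c` is dominated
by a density that `I`-converges to `0`, contradicting that `c` is a cluster point. -/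

lemma stCount_nonneg (P : ℕ → Prop) (n : ℕ) : 0 ≤ stCount P n := by
  unfold stCount
  positivity

lemma stCount_mono {P Q : ℕ → Prop} (hPQ : ∀ k, P k → Q k) (n : ℕ) :
    stCount P n ≤ stCount Q n := by
  unfold stCount
  gcongr
  exact hPQ _

lemma ITendsto.zero_of_nonneg_of_le {I : Set (Set ℕ)}
    (hI : ∀ A B : Set ℕ, A ∈ I → B ⊆ A → B ∈ I) {a b : ℕ → ℝ}
    (ha : ∀ n, 0 ≤ a n) (hab : ∀ n, a n ≤ b n) (hb : ITendsto I b 0) :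
    ITendsto I a 0 := by
  intro ε hε
  refine hI _ _ (hb ε hε) fun n hn => ?_
  simp only [Set.mem_ofPred_eq, sub_zero, abs_of_nonneg (ha n)] at hn ⊢
  exact hn.trans ((hab n).trans (le_abs_self _))

lemma stCount_norm_sub_lt_le {X : Type*} [NormedAddCommGroup X] (x : ℕ → X)
    (c ξ : X) (ε : ℝ) (n : ℕ) :
    stCount (fun k => ‖x k - c‖ < ε) n ≤ stCount (fun k => ‖ξ - c‖ - ε ≤ ‖x k - ξ‖) n := by
  refine stCount_mono (fun k hk => ?_) n
  have := norm_sub_le_norm_sub_add_norm_sub ξ (x k) c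
  rw [norm_sub_rev ξ (x k)] at this
  linarith

theorem stmt_8_general {X : Type*} [NormedAddCommGroup X]
    (I : Set (Set ℕ)) (hI : IsAdmissibleIdeal I) (x : ℕ → X) (r : ℝ)
    (c : X) (hc : IStatClusterPt I x c) (ξ : X) (hξ : RoughIStatLim' I x r ξ) :
    ‖ξ - c‖ ≤ r := by
  by_contra! h
  set ε := (‖ξ - c‖ - r) / 2
  have hε : 0 < ε := half_pos (sub_pos.mpr h)
  have hrε : r + ε = ‖ξ - c‖ - ε := by ring
  apply hc ε hε
  refine ITendsto.zero_of_nonneg_of_le hI.2.2.2.1 (stCount_nonneg _) (fun n => ?_) (hξ ε hε)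
  rw [hrε]
  exact stCount_norm_sub_lt_le x c ξ ε n

theorem stmt_8 {X : Type*} [NormedAddCommGroup X] [NormedSpace ℝ X]
    (I : Set (Set ℕ)) (hI : IsAdmissibleIdeal I) (x : ℕ → X) (r : ℝ) (hr : 0 ≤ r)
    (c : X) (hc : IStatClusterPt I x c) (ξ : X) (hξ : RoughIStatLim' I x r ξ) :
    ‖ξ - c‖ ≤ r :=
  stmt_8_general I hI x r c hc ξ hξ
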